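/- arXiv:2202.02848 — 3 statements merged into one kernel-verified Lean document; each statement's English description precedes it below -/
import Mathlib

section
/- Let n ∈ ℕ and let K₊ and K₋ be two disjoint compact subsets of Euclidean space ℝⁿ such that the complements ℝⁿ ∖ K₊ and ℝⁿ ∖ K₋ are both connected. Then the complement ℝⁿ ∖ (K₊ ∪ K₋) is connected. -/
/-!
Suppose `(K₁ ∪ K₂)ᶜ = A ∪ B` with `A`, `B` open, disjoint and nonempty, and let `u` be an Urysohn
function with `u = 0` on `K₁` and `u = 1` on `K₂`. Reflecting `u` to `c - u` on `B` gives, for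
`c = 0`, a function continuous on `K₂ᶜ` and, for `c = 2`, one continuous on `K₁ᶜ`; modulo `2` the
two agree and are continuous on the whole space. Since the space is simply connected, this
circle-valued map has a real lift `F`. On each of the connected sets `K₂ᶜ` and `K₁ᶜ`, `F` minus the
corresponding reflection is a continuous function with values in `2ℤ`, hence constant; comparing
the two constants at a point of `A` and a point of `B` gives `0 = 2`.
-/

open Set AddSubgroup

variable {X : Type*} [TopologicalSpace X]

theorem ContinuousMap.exists_lift_addCircle [SimplyConnectedSpace X] [LocallyPathConnectedSpace X]
    {p : ℝ} (f : C(X, AddCircle p)) : ∃ F : C(X, ℝ), ∀ x, (F x : AddCircle p) = f x := by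
  obtain ⟨x₀⟩ := (inferInstance : Nonempty X)
  obtain ⟨e₀, he₀⟩ := QuotientAddGroup.mk_surjective (f x₀)
  obtain ⟨F, -, hF⟩ :=
    ((AddCircle.isCoveringMap_coe p).existsUnique_continuousMap_lifts f x₀ e₀ he₀).exists
  exact ⟨F, congrFun hF⟩

theorem IsPreconnected.sub_eq_sub_of_coe_eq {S : Set X} (hS : IsPreconnected S) {p : ℝ}
    {φ ψ : X → ℝ} (hφ : ContinuousOn φ S) (hψ : ContinuousOn ψ S)
    (h : ∀ x ∈ S, (φ x : AddCircle p) = ψ x) {x y : X} (hx : x ∈ S) (hy : y ∈ S) :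
    φ x - ψ x = φ y - ψ y :=
  hS.constant_of_mapsTo (T := (zmultiples p : Set ℝ))
    (isDiscrete_iff_discreteTopology.mpr (inferInstanceAs (DiscreteTopology (zmultiples p))))
    (hφ.sub hψ) (fun z hz => QuotientAddGroup.eq_iff_sub_mem.mp (h z hz)) hx hy

theorem frontier_subset_compl_union_of_isOpen {A B : Set X} (hA : IsOpen A) (hB : IsOpen B)
    (hAB : Disjoint A B) : frontier B ⊆ (A ∪ B)ᶜ := by
  intro x hx
  rw [hB.frontier_eq] at hx
  exact fun hxAB => hxAB.elim (fun hxA => (hAB.closure_right hA).notMem_of_mem_left hxA hx.1) hx.2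

theorem Continuous.comp_piecewise {Y Z : Type*} [TopologicalSpace Y] [TopologicalSpace Z]
    {h : Y → Z} {f g : X → Y} {B : Set X} [∀ x, Decidable (x ∈ B)] (hh : Continuous h)
    (hf : Continuous f) (hg : Continuous g) (heq : ∀ x ∈ frontier B, h (f x) = h (g x)) :
    Continuous fun x => h (B.piecewise f g x) := by
  simp only [apply_piecewise _ _ _ (fun _ => h)]
  exact Continuous.piecewise heq (hh.comp hf) (hh.comp hg)

theorem nonempty_compl_union_of_disjoint [PreconnectedSpace X] {K₁ K₂ : Set X}
    (h₁ : IsClosed K₁) (h₂ : IsClosed K₂) (hdisj : Disjoint K₁ K₂) (hne₁ : K₁ᶜ.Nonempty)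
    (hne₂ : K₂ᶜ.Nonempty) : (K₁ ∪ K₂)ᶜ.Nonempty := by
  rw [nonempty_compl] at hne₁ hne₂ ⊢
  intro hcover
  have hK₁ : K₁ = K₂ᶜ := IsCompl.eq_compl ⟨hdisj, codisjoint_iff.mpr hcover⟩
  rcases isClopen_iff.mp ⟨h₁, hK₁ ▸ h₂.isOpen_compl⟩ with h | h
  · exact hne₂ (by rwa [h, eq_comm, compl_empty_iff] at hK₁)
  · exact hne₁ h

theorem false_of_compl_union_eq_union_of_isOpen [NormalSpace X] [SimplyConnectedSpace X]
    [LocallyPathConnectedSpace X] {K₁ K₂ A B : Set X} (h₁ : IsClosed K₁) (h₂ : IsClosed K₂)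
    (hdisj : Disjoint K₁ K₂) (hc₁ : IsPreconnected K₁ᶜ) (hc₂ : IsPreconnected K₂ᶜ)
    (hA : IsOpen A) (hB : IsOpen B) (hAB : Disjoint A B) (hU : (K₁ ∪ K₂)ᶜ = A ∪ B)
    {a b : X} (ha : a ∈ A) (hb : b ∈ B) : False := by
  classical
  obtain ⟨u, hu₁, hu₂, -⟩ := exists_continuous_zero_one_of_isClosed h₁ h₂ hdisj
  have hfr : frontier B ⊆ K₁ ∪ K₂ := by
    simpa only [← hU, compl_compl] using frontier_subset_compl_union_of_isOpen hA hB hAB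
  have h2Z : (-2 : ℝ) ∈ zmultiples (2 : ℝ) := neg_mem (mem_zmultiples 2)
  let φ : ℝ → X → ℝ := fun c => B.piecewise (fun x => c - u x) u
  have hφ₀ : ContinuousOn (φ 0) K₂ᶜ := by
    refine ContinuousOn.piecewise (fun x hx => ?_) (by fun_prop) (by fun_prop)
    obtain hx₁ | hx₂ := hfr hx.2
    · simp [hu₁ hx₁]
    · exact absurd hx₂ hx.1
  have hφ₂ : ContinuousOn (φ 2) K₁ᶜ := by
    refine ContinuousOn.piecewise (fun x hx => ?_) (by fun_prop) (by fun_prop)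
    obtain hx₁ | hx₂ := hfr hx.2
    · exact absurd hx₁ hx.1
    · rw [hu₂ hx₂]; norm_num
  have hφ_coe : ∀ x, (φ 0 x : AddCircle (2 : ℝ)) = φ 2 x := by
    intro x
    by_cases hx : x ∈ B
    · simp only [φ, piecewise_eq_of_mem _ _ _ hx, QuotientAddGroup.eq_iff_sub_mem]
      convert h2Z using 1; ring
    · simp only [φ, piecewise_eq_of_notMem _ _ _ hx]
  have hcircle : Continuous fun x => (φ 0 x : AddCircle (2 : ℝ)) := by
    refine continuous_quotient_mk'.comp_piecewise (by fun_prop) (by fun_prop) fun x hx => ?_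
    obtain hx₁ | hx₂ := hfr hx
    · simp [hu₁ hx₁]
    · rw [hu₂ hx₂]
      exact QuotientAddGroup.eq_iff_sub_mem.mpr (by convert h2Z using 1; norm_num)
  obtain ⟨F, hF⟩ := ContinuousMap.exists_lift_addCircle ⟨_, hcircle⟩
  have haK : a ∈ K₁ᶜ ∩ K₂ᶜ := compl_union K₁ K₂ ▸ hU ▸ Or.inl ha
  have hbK : b ∈ K₁ᶜ ∩ K₂ᶜ := compl_union K₁ K₂ ▸ hU ▸ Or.inr hb
  have h₀ := hc₂.sub_eq_sub_of_coe_eq F.continuous.continuousOn hφ₀ (fun x _ => hF x) haK.2 hbK.2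
  have h₂' := hc₁.sub_eq_sub_of_coe_eq F.continuous.continuousOn hφ₂
    (fun x _ => (hF x).trans (hφ_coe x)) haK.1 hbK.1
  simp only [φ, piecewise_eq_of_mem _ _ _ hb,
    piecewise_eq_of_notMem _ _ _ (hAB.notMem_of_mem_left ha)] at h₀ h₂'
  linarith

theorem isPreconnected_compl_union_of_disjoint [NormalSpace X] [SimplyConnectedSpace X]
    [LocallyPathConnectedSpace X] {K₁ K₂ : Set X} (h₁ : IsClosed K₁) (h₂ : IsClosed K₂)
    (hdisj : Disjoint K₁ K₂) (hc₁ : IsPreconnected K₁ᶜ) (hc₂ : IsPreconnected K₂ᶜ) :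
    IsPreconnected (K₁ ∪ K₂)ᶜ := by
  rintro O₁ O₂ hO₁ hO₂ hcover ⟨a, haU, ha⟩ ⟨b, hbU, hb⟩
  by_contra hsep
  have hU : IsOpen (K₁ ∪ K₂)ᶜ := (h₁.union h₂).isOpen_compl
  refine false_of_compl_union_eq_union_of_isOpen h₁ h₂ hdisj hc₁ hc₂ (hU.inter hO₁)
    (hU.inter hO₂) ?_ ?_ ⟨haU, ha⟩ ⟨hbU, hb⟩
  · rw [disjoint_iff_inter_eq_empty, ← not_nonempty_iff_eq_empty]
    rwa [inter_inter_inter_comm, inter_self]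
  · rw [← inter_union_distrib_left, inter_eq_left.mpr hcover]

theorem IsConnected.compl_union_of_disjoint [NormalSpace X] [SimplyConnectedSpace X]
    [LocallyPathConnectedSpace X] {K₁ K₂ : Set X} (h₁ : IsClosed K₁) (h₂ : IsClosed K₂)
    (hdisj : Disjoint K₁ K₂) (hc₁ : IsConnected K₁ᶜ) (hc₂ : IsConnected K₂ᶜ) :
    IsConnected (K₁ ∪ K₂)ᶜ :=
  ⟨nonempty_compl_union_of_disjoint h₁ h₂ hdisj hc₁.nonempty hc₂.nonempty,
    isPreconnected_compl_union_of_disjoint h₁ h₂ hdisj hc₁.isPreconnected hc₂.isPreconnected⟩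

/-- **Disjoint union of compact subsets with connected complement.**
If `K₊` and `K₋` are two disjoint compact subsets of Euclidean space `ℝⁿ`
whose complements are connected, then the complement of `K₊ ∪ K₋` is connected. -/
theorem union_compl_connected_of_disjoint_compact
    (n : ℕ) (Kp Km : Set (EuclideanSpace ℝ (Fin n)))
    (hKp : IsCompact Kp) (hKm : IsCompact Km) (hdisj : Disjoint Kp Km)
    (hcp : IsConnected Kpᶜ) (hcm : IsConnected Kmᶜ) :
    IsConnected (Kp ∪ Km)ᶜ :=
  hcp.compl_union_of_disjoint hKp.isClosed hKm.isClosed hdisj hcm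
end

section
/- Let V be a vector space over ℝ, let k ∈ ℕ, let f : V →ₗ[ℝ] ℝ² be a surjective linear map, and let g₁, g₂, g₃ : V →ₗ[ℝ] ℝ^{k+1} be linear maps such that the joint map v ↦ (g₁ v, g₂ v, g₃ v) is surjective onto ℝ^{k+1} × ℝ^{k+1} × ℝ^{k+1}. Then there exists an index i ∈ {1,2,3} such that the product map v ↦ (f v, gᵢ v) is surjective onto ℝ² × ℝ^{k+1}. -/
open Module

private lemma aux_factor {V : Type*} [AddCommGroup V] [Module ℝ V] {n : ℕ}
    (f : V →ₗ[ℝ] (Fin 2 → ℝ)) (hf : Function.Surjective f)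
    (g : V →ₗ[ℝ] (Fin n → ℝ))
    (h : ¬ Function.Surjective (fun v : V => (f v, g v))) :
    ∃ (φ : (Fin n → ℝ) →ₗ[ℝ] ℝ) (ψ : (Fin 2 → ℝ) →ₗ[ℝ] ℝ),
      φ ≠ 0 ∧ ∀ v, φ (g v) = ψ (f v) := by
  set W : Submodule ℝ (Fin n → ℝ) := (LinearMap.ker f).map g with hW
  have hWt : W ≠ ⊤ := by
    intro htop
    apply h
    rintro ⟨a, b⟩
    obtain ⟨v, hv⟩ := hf a
    have : b - g v ∈ W := htop ▸ Submodule.mem_top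
    obtain ⟨w, hw, hgw⟩ := this
    refine ⟨v + w, ?_⟩
    have hfw : f w = 0 := hw
    have hb : g v + g w = b := by rw [hgw]; abel
    simp only [map_add, hv, hfw, add_zero, hb]
  obtain ⟨φ, hφ, hφW⟩ := W.exists_dual_map_eq_bot_of_lt_top hWt.lt_top inferInstance
  obtain ⟨s, hs⟩ := f.exists_rightInverse_of_surjective (LinearMap.range_eq_top.2 hf)
  refine ⟨φ, φ.comp (g.comp s), hφ, fun v => ?_⟩
  have hker : v - s (f v) ∈ LinearMap.ker f := by
    simp only [LinearMap.mem_ker, map_sub]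
    have := LinearMap.congr_fun hs (f v)
    simp only [LinearMap.comp_apply, LinearMap.id_apply] at this
    rw [this, sub_self]
  have : φ (g (v - s (f v))) = 0 := by
    have hmem : g (v - s (f v)) ∈ W := ⟨_, hker, rfl⟩
    have := hφW ▸ Submodule.mem_map_of_mem (f := φ) hmem
    simpa using this
  simp only [map_sub] at this
  simp only [LinearMap.comp_apply]
  linarith

/-- **Linear algebra trick from the proof of Proposition 1.11.**
Let `V` be a real vector space, `f : V →ₗ[ℝ] ℝ²` a surjective linear map and
`g₁, g₂, g₃ : V →ₗ[ℝ] ℝ^{k+1}` linear maps whose joint map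
`v ↦ (g₁ v, g₂ v, g₃ v)` is surjective. Then for some `i ∈ {1,2,3}` the
product map `v ↦ (f v, gᵢ v)` is surjective onto `ℝ² × ℝ^{k+1}`. -/
theorem exists_index_prod_surjective
    (V : Type*) [AddCommGroup V] [Module ℝ V] (k : ℕ)
    (f : V →ₗ[ℝ] (Fin 2 → ℝ)) (hf : Function.Surjective f)
    (g₁ g₂ g₃ : V →ₗ[ℝ] (Fin (k + 1) → ℝ))
    (hg : Function.Surjective (fun v : V => (g₁ v, g₂ v, g₃ v))) :
    Function.Surjective (fun v : V => (f v, g₁ v)) ∨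
    Function.Surjective (fun v : V => (f v, g₂ v)) ∨
    Function.Surjective (fun v : V => (f v, g₃ v)) := by
  by_contra hc
  push_neg at hc
  obtain ⟨h1, h2, h3⟩ := hc
  obtain ⟨φ₁, ψ₁, hφ₁, hfact₁⟩ := aux_factor f hf g₁ h1
  obtain ⟨φ₂, ψ₂, hφ₂, hfact₂⟩ := aux_factor f hf g₂ h2
  obtain ⟨φ₃, ψ₃, hφ₃, hfact₃⟩ := aux_factor f hf g₃ h3
  -- the three functionals ψᵢ on ℝ² are linearly dependent
  have hdual : FiniteDimensional ℝ ((Fin 2 → ℝ) →ₗ[ℝ] ℝ) := inferInstance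
  have hrank : finrank ℝ ((Fin 2 → ℝ) →ₗ[ℝ] ℝ) = 2 := by
    simp [finrank_linearMap]
  have hnli : ¬ LinearIndependent ℝ ![ψ₁, ψ₂, ψ₃] := by
    intro hli
    have := hli.fintype_card_le_finrank
    rw [hrank] at this
    simp at this
  rw [Fintype.not_linearIndependent_iff] at hnli
  obtain ⟨c, hc0, i, hci⟩ := hnli
  have key : ∀ v : V, c 0 * φ₁ (g₁ v) + c 1 * φ₂ (g₂ v) + c 2 * φ₃ (g₃ v) = 0 := by
    intro v
    have := LinearMap.congr_fun hc0 (f v)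
    simp only [LinearMap.sum_apply, LinearMap.add_apply, LinearMap.smul_apply, Fin.sum_univ_three,
      Matrix.cons_val_zero, Matrix.cons_val_one, Matrix.head_cons,
      Matrix.cons_val_two, Matrix.tail_cons, smul_eq_mul,
      LinearMap.zero_apply] at this
    rw [hfact₁, hfact₂, hfact₃]
    linarith
  fin_cases i
  · obtain ⟨x, hx⟩ := DFunLike.ne_iff.1 hφ₁
    obtain ⟨v, hv⟩ := hg (x, 0, 0)
    simp only [Prod.mk.injEq] at hv
    have := key v
    rw [hv.1, hv.2.1, hv.2.2] at this
    simp only [map_zero, mul_zero, add_zero] at this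
    simp only [LinearMap.zero_apply] at hx
    exact hx ((mul_eq_zero.1 this).resolve_left hci)
  · obtain ⟨x, hx⟩ := DFunLike.ne_iff.1 hφ₂
    obtain ⟨v, hv⟩ := hg (0, x, 0)
    simp only [Prod.mk.injEq] at hv
    have := key v
    rw [hv.1, hv.2.1, hv.2.2] at this
    simp only [map_zero, mul_zero, add_zero, zero_add] at this
    simp only [LinearMap.zero_apply] at hx
    exact hx ((mul_eq_zero.1 this).resolve_left hci)
  · obtain ⟨x, hx⟩ := DFunLike.ne_iff.1 hφ₃
    obtain ⟨v, hv⟩ := hg (0, 0, x)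
    simp only [Prod.mk.injEq] at hv
    have := key v
    rw [hv.1, hv.2.1, hv.2.2] at this
    simp only [map_zero, mul_zero, add_zero, zero_add] at this
    simp only [LinearMap.zero_apply] at hx
    exact hx ((mul_eq_zero.1 this).resolve_left hci)
end

section
/- For a smooth vector field X : ℝ³ → ℝ³ and n ∈ ℕ, set Ñₙ(X) := sup_{x∈ℝ³} (1+‖x‖)·‖iteratedFDeriv ℝ n X x‖ ∈ [0,∞]. Let (Xₘ)_{m∈ℕ} be a sequence of Beltrami fields on ℝ³ with sharp decay which is Cauchy in every seminorm Ñₙ, i.e. for every n ∈ ℕ and ε > 0 there exists M such that Ñₙ(Xₘ − Xₘ') ≤ ε for all m, m' ≥ M. Then there exists a Beltrami field X on ℝ³ with sharp decay such that Ñₙ(Xₘ − X) → 0 as m → ∞, for every n ∈ ℕ. -/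
/-!
Since the weight `1 + ‖x‖` is at least `1`, the weighted Cauchy conditions make every iterated
derivative of `Xₘ` uniformly Cauchy, hence uniformly convergent. Uniform convergence of all
derivatives makes the pointwise limit `Y` smooth, with these limits as its iterated derivatives.
The weighted estimates survive the pointwise limit, which gives convergence in every `Ñₙ` and the
sharp decay of `Y`; and `curl Y = Y` because `curl X x` is a continuous function of `fderiv X x`.
-/

noncomputable section

/-- Partial derivative of a scalar function on `ℝ³` in the `i`-th coordinate direction. -/
def pderiv3 (i : Fin 3) (f : EuclideanSpace ℝ (Fin 3) → ℝ) :
    EuclideanSpace ℝ (Fin 3) → ℝ :=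
  fun x => fderiv ℝ f x (EuclideanSpace.single i (1 : ℝ))

/-- The curl of a vector field `X = (X₀, X₁, X₂)` on `ℝ³`:
`curl X = (∂₁X₂ − ∂₂X₁, ∂₂X₀ − ∂₀X₂, ∂₀X₁ − ∂₁X₀)`. -/
def curl3 (X : EuclideanSpace ℝ (Fin 3) → EuclideanSpace ℝ (Fin 3)) :
    EuclideanSpace ℝ (Fin 3) → EuclideanSpace ℝ (Fin 3) :=
  fun x => (WithLp.equiv 2 (Fin 3 → ℝ)).symm
    ![pderiv3 1 (fun y => X y 2) x - pderiv3 2 (fun y => X y 1) x,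
      pderiv3 2 (fun y => X y 0) x - pderiv3 0 (fun y => X y 2) x,
      pderiv3 0 (fun y => X y 1) x - pderiv3 1 (fun y => X y 0) x]

/-- `X` has sharp decay: every iterated derivative is dominated by `(1 + ‖x‖)⁻¹`. -/
def HasSharpDecay (X : EuclideanSpace ℝ (Fin 3) → EuclideanSpace ℝ (Fin 3)) : Prop :=
  ∀ n : ℕ, ∃ C : ℝ, ∀ x : EuclideanSpace ℝ (Fin 3),
    (1 + ‖x‖) * ‖iteratedFDeriv ℝ n X x‖ ≤ C

open Filter Topology
open scoped ContDiff

section WeightedConvergence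

variable {α F : Type*} [NormedAddCommGroup F] {w : α → ℝ} {u : ℕ → α → F}

theorem exists_weighted_limit_of_weighted_cauchy [CompleteSpace F] (hw : ∀ x, 0 < w x)
    (hu : ∀ ε > 0, ∃ M : ℕ, ∀ m ≥ M, ∀ m' ≥ M, ∀ x, w x * ‖u m x - u m' x‖ ≤ ε) :
    ∃ g : α → F, ∀ ε > 0, ∃ M : ℕ, ∀ m ≥ M, ∀ x, w x * ‖u m x - g x‖ ≤ ε := by
  have hcauchy : ∀ x, CauchySeq fun m => u m x := by
    intro x
    rw [Metric.cauchySeq_iff']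
    intro ε hε
    obtain ⟨M, hM⟩ := hu (w x * (ε / 2)) (mul_pos (hw x) (half_pos hε))
    refine ⟨M, fun m hm => ?_⟩
    have hle : ‖u m x - u M x‖ ≤ ε / 2 :=
      (mul_le_mul_iff_of_pos_left (hw x)).1 (hM m hm M le_rfl x)
    rw [dist_eq_norm]
    linarith
  choose g hg using fun x => cauchySeq_tendsto_of_complete (hcauchy x)
  refine ⟨g, fun ε hε => ?_⟩
  obtain ⟨M, hM⟩ := hu ε hε
  refine ⟨M, fun m hm x => le_of_tendsto (((hg x).const_sub (u m x)).norm.const_mul (w x)) ?_⟩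
  filter_upwards [eventually_ge_atTop M] with m' hm' using hM m hm m' hm' x

theorem tendstoUniformly_of_weighted_limit (hw : ∀ x, 1 ≤ w x) {g : α → F}
    (hg : ∀ ε > 0, ∃ M : ℕ, ∀ m ≥ M, ∀ x, w x * ‖u m x - g x‖ ≤ ε) :
    TendstoUniformly u g atTop := by
  rw [Metric.tendstoUniformly_iff]
  intro ε hε
  obtain ⟨M, hM⟩ := hg (ε / 2) (half_pos hε)
  filter_upwards [eventually_ge_atTop M] with m hm x
  calc dist (g x) (u m x) = ‖u m x - g x‖ := dist_eq_norm' _ _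
    _ ≤ w x * ‖u m x - g x‖ := le_mul_of_one_le_left (norm_nonneg _) (hw x)
    _ ≤ ε / 2 := hM m hm x
    _ < ε := half_lt_self hε

end WeightedConvergence

section SmoothLimit

variable {𝕜 E F ι : Type*} [RCLike 𝕜] [NormedAddCommGroup E] [NormedSpace 𝕜 E]
  [NormedAddCommGroup F] [NormedSpace 𝕜 F] {l : Filter ι} [l.NeBot]
  {f : ι → E → F} {Y : E → F}
  {g : (n : ℕ) → E → ContinuousMultilinearMap 𝕜 (fun _ : Fin n => E) F}

theorem hasFDerivAt_iteratedFDeriv_of_tendstoUniformly (hf : ∀ i, ContDiff 𝕜 ∞ (f i)) {n : ℕ}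
    (hg : TendstoUniformly (fun i => iteratedFDeriv 𝕜 (n + 1) (f i)) (g (n + 1)) l)
    (hY : ∀ x, Tendsto (fun i => iteratedFDeriv 𝕜 n (f i) x) l (𝓝 (iteratedFDeriv 𝕜 n Y x)))
    (x : E) :
    HasFDerivAt (iteratedFDeriv 𝕜 n Y)
      (continuousMultilinearCurryLeftEquiv 𝕜 (fun _ : Fin (n + 1) => E) F (g (n + 1) x)) x := by
  set e := continuousMultilinearCurryLeftEquiv 𝕜 (fun _ : Fin (n + 1) => E) F
  have hderiv : ∀ i x, HasFDerivAt (iteratedFDeriv 𝕜 n (f i))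
      (e (iteratedFDeriv 𝕜 (n + 1) (f i) x)) x := fun i x =>
    ((hf i).differentiable_iteratedFDeriv (mod_cast ENat.natCast_lt_top n) x).hasFDerivAt
  exact hasFDerivAt_of_tendstoUniformly (e.isometry.uniformContinuous.comp_tendstoUniformly hg)
    hderiv hY x

variable (hf : ∀ i, ContDiff 𝕜 ∞ (f i))
  (hg : ∀ n, TendstoUniformly (fun i => iteratedFDeriv 𝕜 n (f i)) (g n) l)
  (hY : ∀ x, Tendsto (fun i => f i x) l (𝓝 (Y x)))
include hf hg hY

theorem iteratedFDeriv_eq_of_tendstoUniformly (n : ℕ) : iteratedFDeriv 𝕜 n Y = g n := by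
  induction n with
  | zero =>
    funext x
    refine tendsto_nhds_unique ?_ ((hg 0).tendsto_at x)
    simpa only [iteratedFDeriv_zero_eq_comp, Function.comp_def] using
      ((continuousMultilinearCurryFin0 𝕜 E F).symm.continuous.tendsto _).comp (hY x)
  | succ n ih =>
    funext x
    have hY' : ∀ x, Tendsto (fun i => iteratedFDeriv 𝕜 n (f i) x) l
        (𝓝 (iteratedFDeriv 𝕜 n Y x)) := fun x => ih ▸ (hg n).tendsto_at x
    rw [iteratedFDeriv_succ_eq_comp_left, Function.comp_apply,
      (hasFDerivAt_iteratedFDeriv_of_tendstoUniformly hf (hg (n + 1)) hY' x).fderiv,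
      LinearIsometryEquiv.symm_apply_apply]

theorem contDiff_of_tendstoUniformly_iteratedFDeriv : ContDiff 𝕜 ∞ Y :=
  contDiff_of_differentiable_iteratedFDeriv fun n _ x =>
    (hasFDerivAt_iteratedFDeriv_of_tendstoUniformly hf (hg (n + 1))
      (fun x => iteratedFDeriv_eq_of_tendstoUniformly hf hg hY n ▸ (hg n).tendsto_at x)
      x).differentiableAt

theorem tendsto_fderiv_of_tendstoUniformly_iteratedFDeriv (x : E) :
    Tendsto (fun i => fderiv 𝕜 (f i) x) l (𝓝 (fderiv 𝕜 Y x)) := by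
  have hfderiv : ∀ h : E → F,
      fderiv 𝕜 h x = continuousMultilinearCurryFin1 𝕜 E F (iteratedFDeriv 𝕜 1 h x) := by
    intro h; ext v; simp
  have hlim := (hg 1).tendsto_at x
  rw [← iteratedFDeriv_eq_of_tendstoUniformly hf hg hY 1] at hlim
  simpa only [hfderiv, Function.comp_def] using
    ((continuousMultilinearCurryFin1 𝕜 E F).continuous.tendsto _).comp hlim

end SmoothLimit

section Beltrami

local notation "ℝ³" => EuclideanSpace ℝ (Fin 3)

def curlOfFDeriv (L : ℝ³ →L[ℝ] ℝ³) : ℝ³ :=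
  WithLp.toLp 2 ![L (EuclideanSpace.single 1 1) 2 - L (EuclideanSpace.single 2 1) 1,
    L (EuclideanSpace.single 2 1) 0 - L (EuclideanSpace.single 0 1) 2,
    L (EuclideanSpace.single 0 1) 1 - L (EuclideanSpace.single 1 1) 0]

theorem continuous_curlOfFDeriv : Continuous curlOfFDeriv := by
  unfold curlOfFDeriv
  fun_prop

theorem pderiv3_apply_eq_fderiv {W : ℝ³ → ℝ³} {x : ℝ³} (hW : DifferentiableAt ℝ W x)
    (i j : Fin 3) : pderiv3 i (fun y => W y j) x = fderiv ℝ W x (EuclideanSpace.single i 1) j := by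
  have h : HasFDerivAt (fun y => W y j) ((EuclideanSpace.proj (𝕜 := ℝ) j).comp (fderiv ℝ W x)) x :=
    (EuclideanSpace.proj (𝕜 := ℝ) j).hasFDerivAt.comp x hW.hasFDerivAt
  simp [pderiv3, h.fderiv]

theorem curl3_eq_curlOfFDeriv {W : ℝ³ → ℝ³} {x : ℝ³} (hW : DifferentiableAt ℝ W x) :
    curl3 W x = curlOfFDeriv (fderiv ℝ W x) := by
  simp only [curl3, curlOfFDeriv, pderiv3_apply_eq_fderiv hW]
  rfl

theorem tendsto_curl3_of_tendsto_fderiv {ι : Type*} {l : Filter ι} {W : ι → ℝ³ → ℝ³}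
    {V : ℝ³ → ℝ³} {x : ℝ³} (hW : ∀ i, DifferentiableAt ℝ (W i) x) (hV : DifferentiableAt ℝ V x)
    (h : Tendsto (fun i => fderiv ℝ (W i) x) l (𝓝 (fderiv ℝ V x))) :
    Tendsto (fun i => curl3 (W i) x) l (𝓝 (curl3 V x)) := by
  have hcurl : (fun i => curl3 (W i) x) = fun i => curlOfFDeriv (fderiv ℝ (W i) x) :=
    funext fun i => curl3_eq_curlOfFDeriv (hW i)
  rw [hcurl, curl3_eq_curlOfFDeriv hV]
  exact (continuous_curlOfFDeriv.tendsto _).comp h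

theorem hasSharpDecay_of_weighted_tendsto {X : ℕ → ℝ³ → ℝ³} {Y : ℝ³ → ℝ³}
    (hX : ∀ m, HasSharpDecay (X m))
    (hlim : ∀ n, ∃ m, ∀ x,
      (1 + ‖x‖) * ‖iteratedFDeriv ℝ n (X m) x - iteratedFDeriv ℝ n Y x‖ ≤ 1) :
    HasSharpDecay Y := by
  intro n
  obtain ⟨m, hm⟩ := hlim n
  obtain ⟨C, hC⟩ := hX m n
  refine ⟨C + 1, fun x => ?_⟩
  calc (1 + ‖x‖) * ‖iteratedFDeriv ℝ n Y x‖
      ≤ (1 + ‖x‖) * (‖iteratedFDeriv ℝ n (X m) x‖ +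
          ‖iteratedFDeriv ℝ n (X m) x - iteratedFDeriv ℝ n Y x‖) := by
        gcongr
        exact norm_le_norm_add_norm_sub _ _
    _ ≤ C + 1 := by rw [mul_add]; exact add_le_add (hC x) (hm x)

end Beltrami

/-- **Sequential completeness of the space `ℬ(ℝ³)` of Beltrami fields with sharp decay**
(Section 4.1). A sequence of Beltrami fields with sharp decay which is Cauchy for
every weighted seminorm `Ñₙ(X) = sup_x (1+‖x‖)·‖iteratedFDeriv ℝ n X x‖` converges, in
every seminorm `Ñₙ`, to a Beltrami field with sharp decay. -/
theorem beltrami_sharpDecay_complete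
    (X : ℕ → EuclideanSpace ℝ (Fin 3) → EuclideanSpace ℝ (Fin 3))
    (hsmooth : ∀ m : ℕ, ContDiff ℝ (⊤ : ℕ∞) (X m))
    (hBeltrami : ∀ m : ℕ, ∀ x, curl3 (X m) x = X m x)
    (hdecay : ∀ m : ℕ, HasSharpDecay (X m))
    (hCauchy : ∀ n : ℕ, ∀ ε : ℝ, 0 < ε → ∃ M : ℕ, ∀ m ≥ M, ∀ m' ≥ M, ∀ x,
      (1 + ‖x‖) * ‖iteratedFDeriv ℝ n (fun y => X m y - X m' y) x‖ ≤ ε) :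
    ∃ Y : EuclideanSpace ℝ (Fin 3) → EuclideanSpace ℝ (Fin 3),
      ContDiff ℝ (⊤ : ℕ∞) Y ∧ (∀ x, curl3 Y x = Y x) ∧ HasSharpDecay Y ∧
      ∀ n : ℕ, ∀ ε : ℝ, 0 < ε → ∃ M : ℕ, ∀ m ≥ M, ∀ x,
        (1 + ‖x‖) * ‖iteratedFDeriv ℝ n (fun y => X m y - Y y) x‖ ≤ ε := by
  have hsub : ∀ {V W : EuclideanSpace ℝ (Fin 3) → EuclideanSpace ℝ (Fin 3)},
      ContDiff ℝ ∞ V → ContDiff ℝ ∞ W → ∀ n x, iteratedFDeriv ℝ n (fun y => V y - W y) x =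
        iteratedFDeriv ℝ n V x - iteratedFDeriv ℝ n W x := fun hV hW n _ =>
    fun_iteratedFDeriv_sub_apply (hV.contDiffAt.of_le (mod_cast le_top))
      (hW.contDiffAt.of_le (mod_cast le_top))
  have hweight : ∀ x : EuclideanSpace ℝ (Fin 3), 1 ≤ 1 + ‖x‖ := fun x =>
    le_add_of_nonneg_right (norm_nonneg x)
  have hweight_pos : ∀ x : EuclideanSpace ℝ (Fin 3), 0 < 1 + ‖x‖ := fun x =>
    zero_lt_one.trans_le (hweight x)
  obtain ⟨Y, hXY⟩ := exists_weighted_limit_of_weighted_cauchy hweight_pos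
    (by simpa only [norm_iteratedFDeriv_zero] using hCauchy 0)
  choose g hXg using fun n => exists_weighted_limit_of_weighted_cauchy hweight_pos
    (by simpa only [hsub (hsmooth _) (hsmooth _)] using hCauchy n)
  have hY := (tendstoUniformly_of_weighted_limit hweight hXY).tendsto_at
  have hg := fun n => tendstoUniformly_of_weighted_limit hweight (hXg n)
  have hDY := iteratedFDeriv_eq_of_tendstoUniformly hsmooth hg hY
  have hYsmooth := contDiff_of_tendstoUniformly_iteratedFDeriv hsmooth hg hY
  refine ⟨Y, hYsmooth, fun x => ?_, ?_, fun n ε hε => ?_⟩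
  · refine tendsto_nhds_unique (tendsto_curl3_of_tendsto_fderiv
      (fun m => (hsmooth m).differentiable (by simp) x) (hYsmooth.differentiable (by simp) x)
      (tendsto_fderiv_of_tendstoUniformly_iteratedFDeriv hsmooth hg hY x)) ?_
    simpa only [hBeltrami] using hY x
  · refine hasSharpDecay_of_weighted_tendsto hdecay fun n => ?_
    obtain ⟨M, hM⟩ := hXg n 1 one_pos
    exact ⟨M, by simpa only [hDY] using hM M le_rfl⟩
  · obtain ⟨M, hM⟩ := hXg n ε hε
    exact ⟨M, fun m hm x => by simpa only [hsub (hsmooth m) hYsmooth, hDY] using hM m hm x⟩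

end
end
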